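/- Assume the form [·,·] is indefinite. Let (x_n) be a sequence of nonzero vectors in H (neutral or non-neutral) converging to some x ∈ H. Then there exists a sequence (J_n) of fundamental symmetries of (H, [·,·]) such that ‖x_n‖_{J_n} → ∞ as n → ∞. -/

import Mathlib

open scoped ComplexOrder

/-- The indefinite (Krein) inner product `[x, y] := ⟪J₀ x, y⟫` induced by the
continuous linear involution `J₀`. -/
noncomputable def kform {H : Type*} [NormedAddCommGroup H] [InnerProductSpace ℂ H]
    (J₀ : H →L[ℂ] H) (x y : H) : ℂ :=
  inner ℂ (J₀ x) y

/-- `J` is a fundamental symmetry of the Krein space `(H, [·,·])`: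
a continuous linear involution, `[·,·]`-selfadjoint, with `[J x, x] > 0` for `x ≠ 0`. -/
def IsFundamentalSymmetry {H : Type*} [NormedAddCommGroup H] [InnerProductSpace ℂ H]
    (J₀ : H →L[ℂ] H) (J : H →L[ℂ] H) : Prop :=
  (∀ x, J (J x) = x) ∧
  (∀ x y, kform J₀ (J x) y = kform J₀ x (J y)) ∧
  (∀ x, x ≠ 0 → 0 < kform J₀ (J x) x)

/-- The `J`-norm `‖x‖_J := [J x, x] ^ (1/2)`. -/
noncomputable def jnorm {H : Type*} [NormedAddCommGroup H] [InnerProductSpace ℂ H]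
    (J₀ : H →L[ℂ] H) (J : H →L[ℂ] H) (x : H) : ℝ :=
  Real.sqrt (kform J₀ (J x) x).re

/-!
For `x ≠ 0`, indefiniteness gives an isotropic `q` with `[q, x] ≠ 0`, which completes to a
hyperbolic pair `(p, q)`. The boost `U_c` (`p ↦ c p`, `q ↦ c⁻¹ q`, identity on `{p, q}^⊥`) is a
Krein isometry, so `J := U_c⁻¹ J₀ U_c` is a fundamental symmetry with
`‖x‖_J = ‖U_c x‖ ≥ c |[q, x]| / ‖J₀ q‖`, which is unbounded in `c`.
-/

section KreinForm

variable {H : Type*} [NormedAddCommGroup H] [InnerProductSpace ℂ H] (J₀ : H →L[ℂ] H)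

lemma kform_add_left (x y z : H) : kform J₀ (x + y) z = kform J₀ x z + kform J₀ y z := by
  simp [kform]

lemma kform_add_right (x y z : H) : kform J₀ x (y + z) = kform J₀ x y + kform J₀ x z := by
  simp [kform]

lemma kform_sub_left (x y z : H) : kform J₀ (x - y) z = kform J₀ x z - kform J₀ y z := by
  simp [kform]

lemma kform_sub_right (x y z : H) : kform J₀ x (y - z) = kform J₀ x y - kform J₀ x z := by
  simp [kform]

lemma kform_smul_left (c : ℂ) (x y : H) :
    kform J₀ (c • x) y = starRingEnd ℂ c * kform J₀ x y := by
  rw [kform, kform, map_smul, inner_smul_left]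

lemma kform_smul_right (c : ℂ) (x y : H) : kform J₀ x (c • y) = c * kform J₀ x y := by
  simp [kform]

lemma norm_kform_le (x y : H) : ‖kform J₀ x y‖ ≤ ‖J₀ x‖ * ‖y‖ :=
  norm_inner_le_norm (J₀ x) y

variable {J₀}

lemma kform_conj (hsa : ∀ x y : H, (inner ℂ (J₀ x) y : ℂ) = inner ℂ x (J₀ y)) (x y : H) :
    kform J₀ x y = starRingEnd ℂ (kform J₀ y x) := by
  rw [kform, kform, ← inner_conj_symm, ← hsa]

lemma kform_self_eq_re (hsa : ∀ x y : H, (inner ℂ (J₀ x) y : ℂ) = inner ℂ x (J₀ y)) (x : H) :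
    kform J₀ x x = ((kform J₀ x x).re : ℂ) :=
  (Complex.conj_eq_iff_re.mp (kform_conj hsa x x).symm).symm

lemma kform_self_J₀ (hinv : ∀ x, J₀ (J₀ x) = x) (x : H) : kform J₀ (J₀ x) x = ‖x‖ ^ 2 := by
  rw [kform, hinv, inner_self_eq_norm_sq_to_K]
  norm_cast

end KreinForm

section FundamentalSymmetry

variable {H : Type*} [NormedAddCommGroup H] [InnerProductSpace ℂ H] {J₀ T S : H →L[ℂ] H}

lemma kform_comp_comp_left (hinv : ∀ x, J₀ (J₀ x) = x)
    (hadj : ∀ a b, kform J₀ (T a) b = kform J₀ a (S b)) (a b : H) :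
    kform J₀ ((T ∘L J₀ ∘L S) a) b = inner ℂ (S a) (S b) := by
  rw [ContinuousLinearMap.comp_apply, ContinuousLinearMap.comp_apply, hadj, kform, hinv]

lemma isFundamentalSymmetry_comp_comp (hinv : ∀ x, J₀ (J₀ x) = x)
    (hsa : ∀ x y : H, (inner ℂ (J₀ x) y : ℂ) = inner ℂ x (J₀ y))
    (hTS : ∀ z, T (S z) = z) (hST : ∀ z, S (T z) = z)
    (hadj : ∀ a b, kform J₀ (T a) b = kform J₀ a (S b)) :
    IsFundamentalSymmetry J₀ (T ∘L J₀ ∘L S) := by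
  refine ⟨fun x => ?_, fun x y => ?_, fun x hx => ?_⟩
  · simp only [ContinuousLinearMap.comp_apply, hST, hinv, hTS]
  · rw [kform_comp_comp_left hinv hadj, kform_conj hsa, kform_comp_comp_left hinv hadj,
      inner_conj_symm]
  · have hSx : S x ≠ 0 := fun h => hx (by rw [← hTS x, h, map_zero])
    rw [kform_comp_comp_left hinv hadj, inner_self_eq_norm_sq_to_K]
    norm_cast
    exact Complex.zero_lt_real.mpr (pow_pos (norm_pos_iff.mpr hSx) 2)

lemma jnorm_comp_comp (hinv : ∀ x, J₀ (J₀ x) = x)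
    (hadj : ∀ a b, kform J₀ (T a) b = kform J₀ a (S b)) (x : H) :
    jnorm J₀ (T ∘L J₀ ∘L S) x = ‖S x‖ := by
  rw [jnorm, kform_comp_comp_left hinv hadj, inner_self_eq_norm_sq_to_K]
  norm_cast
  exact Real.sqrt_sq (norm_nonneg _)

end FundamentalSymmetry

section Boost

variable {H : Type*} [NormedAddCommGroup H] [InnerProductSpace ℂ H] (J₀ : H →L[ℂ] H)

structure IsHyperbolicPair (p q : H) : Prop where
  fst_isotropic : kform J₀ p p = 0
  snd_isotropic : kform J₀ q q = 0
  kform_fst_snd : kform J₀ p q = 1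
  kform_snd_fst : kform J₀ q p = 1

/-- The Krein isometry scaling `p` by `c` and `q` by `c⁻¹` when `(p, q)` is a hyperbolic pair,
and fixing the `[·,·]`-orthogonal complement of `span {p, q}`. -/
noncomputable def boost (p q : H) (c : ℝ) : H →L[ℂ] H :=
  ContinuousLinearMap.id ℂ H + ((c - 1 : ℝ) : ℂ) • (innerSL ℂ (J₀ q)).smulRight p
    + ((c⁻¹ - 1 : ℝ) : ℂ) • (innerSL ℂ (J₀ p)).smulRight q

lemma boost_apply (p q : H) (c : ℝ) (z : H) :
    boost J₀ p q c z =
      z + (((c - 1 : ℝ) : ℂ) * kform J₀ q z) • p + (((c⁻¹ - 1 : ℝ) : ℂ) * kform J₀ p z) • q := by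
  simp [boost, kform, mul_smul]

lemma boost_one (p q : H) (z : H) : boost J₀ p q 1 z = z := by
  simp [boost_apply]

variable {J₀}

lemma kform_boost_left (hsa : ∀ x y : H, (inner ℂ (J₀ x) y : ℂ) = inner ℂ x (J₀ y))
    (p q : H) (c : ℝ) (a b : H) :
    kform J₀ (boost J₀ p q c a) b = kform J₀ a (boost J₀ p q c⁻¹ b) := by
  simp only [boost_apply, inv_inv, kform_add_left, kform_add_right, kform_smul_left,
    kform_smul_right, map_mul, Complex.conj_ofReal]
  rw [kform_conj hsa q a, kform_conj hsa p a]
  simp only [RingHomCompTriple.comp_apply, RingHom.id_apply]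
  ring

variable {p q : H}

lemma kform_fst_boost (h : IsHyperbolicPair J₀ p q) (c : ℝ) (z : H) :
    kform J₀ p (boost J₀ p q c z) = (c⁻¹ : ℝ) * kform J₀ p z := by
  simp only [boost_apply, kform_add_right, kform_smul_right, h.fst_isotropic, h.kform_fst_snd]
  push_cast
  ring

lemma kform_snd_boost (h : IsHyperbolicPair J₀ p q) (c : ℝ) (z : H) :
    kform J₀ q (boost J₀ p q c z) = c * kform J₀ q z := by
  simp only [boost_apply, kform_add_right, kform_smul_right, h.snd_isotropic, h.kform_snd_fst]
  push_cast
  ring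

lemma boost_boost (h : IsHyperbolicPair J₀ p q) (c d : ℝ) (z : H) :
    boost J₀ p q c (boost J₀ p q d z) = boost J₀ p q (c * d) z := by
  rw [boost_apply J₀ p q c, kform_fst_boost h, kform_snd_boost h, boost_apply, boost_apply]
  push_cast
  match_scalars <;> ring

lemma mul_norm_kform_le_norm_boost (h : IsHyperbolicPair J₀ p q) {c : ℝ} (hc : 0 ≤ c) (z : H) :
    c * ‖kform J₀ q z‖ ≤ ‖J₀ q‖ * ‖boost J₀ p q c z‖ := by
  have := norm_kform_le J₀ q (boost J₀ p q c z)
  rwa [kform_snd_boost h, norm_mul, Complex.norm_real, Real.norm_of_nonneg hc] at this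

end Boost

section Isotropic

variable {H : Type*} [NormedAddCommGroup H] [InnerProductSpace ℂ H] {J₀ : H →L[ℂ] H}

lemma exists_isHyperbolicPair_of_isotropic (hinv : ∀ x, J₀ (J₀ x) = x)
    (hsa : ∀ x y : H, (inner ℂ (J₀ x) y : ℂ) = inner ℂ x (J₀ y))
    {q : H} (hq0 : q ≠ 0) (hq : kform J₀ q q = 0) : ∃ p, IsHyperbolicPair J₀ p q := by
  set y : H := ((‖q‖ : ℂ) ^ 2)⁻¹ • J₀ q
  have hyq : kform J₀ y q = 1 := by
    have hq2 : (‖q‖ : ℂ) ^ 2 ≠ 0 := by exact_mod_cast pow_ne_zero 2 (norm_ne_zero_iff.mpr hq0)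
    rw [kform_smul_left, kform_self_J₀ hinv, map_inv₀, map_pow, Complex.conj_ofReal,
      inv_mul_cancel₀ hq2]
  have hqy : kform J₀ q y = 1 := by rw [kform_conj hsa, hyq, map_one]
  set β : ℝ := (kform J₀ y y).re
  have hyy : kform J₀ y y = β := kform_self_eq_re hsa y
  refine ⟨y - ((β / 2 : ℝ) : ℂ) • q, ⟨?_, hq, ?_, ?_⟩⟩ <;>
    simp only [kform_sub_left, kform_sub_right, kform_smul_left, kform_smul_right,
      Complex.conj_ofReal, hq, hyq, hqy, hyy] <;>
    push_cast <;> ring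

/-- The witness is `x + α w` with `w := [x, x] v - [x, v] x`, which is `[·,·]`-orthogonal to `x`
and has `[w, w]` of the sign opposite to `[x, x]`. -/
lemma exists_isotropic_kform_ne_zero_of_mul_neg
    (hsa : ∀ x y : H, (inner ℂ (J₀ x) y : ℂ) = inner ℂ x (J₀ y)) {x v : H} {r t : ℝ}
    (hxx : kform J₀ x x = r) (hvv : kform J₀ v v = t) (hrt : r * t < 0) :
    ∃ q, kform J₀ q q = 0 ∧ kform J₀ q x ≠ 0 := by
  have hr : r ≠ 0 := by rintro rfl; simp at hrt
  obtain ⟨a, hxv⟩ : ∃ a, kform J₀ x v = a := ⟨_, rfl⟩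
  have hvx : kform J₀ v x = starRingEnd ℂ a := by rw [kform_conj hsa, hxv]
  set w : H := (r : ℂ) • v - a • x
  have hwx : kform J₀ w x = 0 := by
    simp only [w, kform_sub_left, kform_smul_left, Complex.conj_ofReal, hxx, hvx]
    ring
  have hxw : kform J₀ x w = 0 := by rw [kform_conj hsa, hwx, map_zero]
  set s : ℝ := r ^ 2 * t - r * Complex.normSq a
  have hww : kform J₀ w w = s := by
    simp only [w, s, kform_sub_left, kform_sub_right, kform_smul_left, kform_smul_right,
      Complex.conj_ofReal, hxx, hvv, hxv, hvx]
    push_cast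
    rw [← Complex.mul_conj]
    ring
  have hrs : r * s < 0 := by
    have : r * s = r ^ 2 * (r * t - Complex.normSq a) := by ring
    rw [this]
    exact mul_neg_of_pos_of_neg (by positivity) (by linarith [Complex.normSq_nonneg a])
  have hs : s ≠ 0 := by rintro hs; simp [hs] at hrs
  have hratio : 0 ≤ -r / s := by
    have : -r / s = -(r * s) / s ^ 2 := by field_simp
    rw [this]
    exact div_nonneg (by linarith) (sq_nonneg s)
  set α : ℝ := Real.sqrt (-r / s)
  have hα : α ^ 2 * s = -r := by rw [Real.sq_sqrt hratio, div_mul_cancel₀ _ hs]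
  refine ⟨x + (α : ℂ) • w, ?_, ?_⟩
  · simp only [kform_add_left, kform_add_right, kform_smul_left, kform_smul_right,
      Complex.conj_ofReal, hxx, hxw, hwx, hww]
    linear_combination (by exact_mod_cast hα : (α : ℂ) ^ 2 * s = -r)
  · simp only [kform_add_left, kform_smul_left, hwx, hxx, mul_zero, add_zero]
    exact_mod_cast hr

lemma exists_isotropic_kform_ne_zero (hinv : ∀ x, J₀ (J₀ x) = x)
    (hsa : ∀ x y : H, (inner ℂ (J₀ x) y : ℂ) = inner ℂ x (J₀ y))
    (hindef : ∃ u v : H, 0 < kform J₀ u u ∧ kform J₀ v v < 0) {x : H} (hx : x ≠ 0) :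
    ∃ q, kform J₀ q q = 0 ∧ kform J₀ q x ≠ 0 := by
  obtain ⟨u, v, hu, hv⟩ := hindef
  rcases lt_trichotomy (kform J₀ x x).re 0 with hneg | hzero | hpos
  · exact exists_isotropic_kform_ne_zero_of_mul_neg hsa (kform_self_eq_re hsa x)
      (kform_self_eq_re hsa u) (mul_neg_of_neg_of_pos hneg (Complex.lt_def.mp hu).1)
  · obtain ⟨p, hp⟩ := exists_isHyperbolicPair_of_isotropic hinv hsa hx
      (by rw [kform_self_eq_re hsa, hzero, Complex.ofReal_zero])
    exact ⟨p, hp.fst_isotropic, hp.kform_fst_snd ▸ one_ne_zero⟩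
  · exact exists_isotropic_kform_ne_zero_of_mul_neg hsa (kform_self_eq_re hsa x)
      (kform_self_eq_re hsa v) (mul_neg_of_pos_of_neg hpos (Complex.lt_def.mp hv).1)

end Isotropic

lemma exists_isFundamentalSymmetry_le_jnorm {H : Type*} [NormedAddCommGroup H]
    [InnerProductSpace ℂ H] {J₀ : H →L[ℂ] H} (hinv : ∀ x, J₀ (J₀ x) = x)
    (hsa : ∀ x y : H, (inner ℂ (J₀ x) y : ℂ) = inner ℂ x (J₀ y))
    (hindef : ∃ u v : H, 0 < kform J₀ u u ∧ kform J₀ v v < 0) {x : H} (hx : x ≠ 0) (R : ℝ) :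
    ∃ J, IsFundamentalSymmetry J₀ J ∧ R ≤ jnorm J₀ J x := by
  obtain ⟨q, hq, hqx⟩ := exists_isotropic_kform_ne_zero hinv hsa hindef hx
  have hJq : 0 < ‖J₀ q‖ := norm_pos_iff.mpr fun h => hqx (by rw [kform, h, inner_zero_left])
  obtain ⟨p, hpq⟩ := exists_isHyperbolicPair_of_isotropic hinv hsa
    (fun h => hJq.ne' (by rw [h, map_zero, norm_zero])) hq
  set c : ℝ := max R 1 * ‖J₀ q‖ / ‖kform J₀ q x‖
  have hc : 0 < c := div_pos (mul_pos (lt_max_of_lt_right one_pos) hJq) (norm_pos_iff.mpr hqx)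
  have hadj : ∀ a b, kform J₀ (boost J₀ p q c⁻¹ a) b = kform J₀ a (boost J₀ p q c b) := by
    intro a b
    rw [kform_boost_left hsa, inv_inv]
  refine ⟨boost J₀ p q c⁻¹ ∘L J₀ ∘L boost J₀ p q c, isFundamentalSymmetry_comp_comp hinv hsa
    (fun z => by rw [boost_boost hpq, inv_mul_cancel₀ hc.ne', boost_one])
    (fun z => by rw [boost_boost hpq, mul_inv_cancel₀ hc.ne', boost_one]) hadj, ?_⟩
  have hgrowth := mul_norm_kform_le_norm_boost hpq hc.le x
  rw [div_mul_cancel₀ _ (norm_ne_zero_iff.mpr hqx), mul_comm] at hgrowth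
  rw [jnorm_comp_comp hinv hadj]
  exact (le_max_left R 1).trans (le_of_mul_le_mul_left hgrowth hJq)

theorem exists_fundamentalSymmetry_seq_jnorm_tendsto_atTop_general
    {H : Type*} [NormedAddCommGroup H] [InnerProductSpace ℂ H]
    (J₀ : H →L[ℂ] H)
    (hinv : ∀ x, J₀ (J₀ x) = x)
    (hsa : ∀ x y : H, (inner ℂ (J₀ x) y : ℂ) = inner ℂ x (J₀ y))
    (hindef : ∃ u v : H, 0 < kform J₀ u u ∧ kform J₀ v v < 0)
    (x : ℕ → H) (hx0 : ∀ n, x n ≠ 0) :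
    ∃ J : ℕ → H →L[ℂ] H, (∀ n, IsFundamentalSymmetry J₀ (J n)) ∧
      Filter.Tendsto (fun n => jnorm J₀ (J n) (x n)) Filter.atTop Filter.atTop := by
  choose J hJ hle using fun n : ℕ =>
    exists_isFundamentalSymmetry_le_jnorm hinv hsa hindef (hx0 n) n
  exact ⟨J, hJ, Filter.tendsto_atTop_mono hle tendsto_natCast_atTop_atTop⟩

theorem exists_fundamentalSymmetry_seq_jnorm_tendsto_atTop
    {H : Type*} [NormedAddCommGroup H] [InnerProductSpace ℂ H] [CompleteSpace H]
    (J₀ : H →L[ℂ] H)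
    (hinv : ∀ x, J₀ (J₀ x) = x)
    (hsa : ∀ x y : H, (inner ℂ (J₀ x) y : ℂ) = inner ℂ x (J₀ y))
    (hindef : ∃ u v : H, 0 < kform J₀ u u ∧ kform J₀ v v < 0)
    (x : ℕ → H) (hx0 : ∀ n, x n ≠ 0)
    (l : H) (hconv : Filter.Tendsto x Filter.atTop (nhds l)) :
    ∃ J : ℕ → H →L[ℂ] H, (∀ n, IsFundamentalSymmetry J₀ (J n)) ∧
      Filter.Tendsto (fun n => jnorm J₀ (J n) (x n)) Filter.atTop Filter.atTop :=
  exists_fundamentalSymmetry_seq_jnorm_tendsto_atTop_general J₀ hinv hsa hindef x hx0
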